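/- If I is a weakly annihilated ideal of a commutative ring R and r ∈ R \ I, then the ideal quotient (I : r) = {a ∈ R : ar ∈ I} is also a weakly annihilated ideal. -/

import Mathlib

/-- An ideal `I` of a commutative ring is weakly annihilated if for each `a ∈ I` and
`b ∉ I` there exists `c` with `c * a = 0` but `c * b ≠ 0`. -/
def WeaklyAnnihilated {R : Type*} [CommRing R] (I : Ideal R) : Prop :=
  ∀ a ∈ I, ∀ b ∉ I, ∃ c : R, c * a = 0 ∧ c * b ≠ 0

/-- If `b ∉ (I : S)`, some `s ∈ S` has `b * s ∉ I`; an annihilator `c` separating `a * s` from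
`b * s` then gives the annihilator `c * s` separating `a` from `b`. -/
theorem WeaklyAnnihilated.colon {R : Type*} [CommRing R] {I : Ideal R}
    (hI : WeaklyAnnihilated I) (S : Set R) : WeaklyAnnihilated (I.colon S) := by
  intro a ha b hb
  simp only [Submodule.mem_colon, smul_eq_mul, not_forall] at ha hb
  obtain ⟨s, hs, hbs⟩ := hb
  obtain ⟨c, hca, hcb⟩ := hI (a * s) (ha s hs) (b * s) hbs
  exact ⟨c * s, by rwa [mul_right_comm, mul_assoc], by rwa [mul_right_comm, mul_assoc]⟩

theorem stmt0 {R : Type*} [CommRing R] (I : Ideal R) (r : R)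
    (hI : WeaklyAnnihilated I) :
    WeaklyAnnihilated (I.colon (Ideal.span {r})) :=
  hI.colon _
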